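/- Let u, v both lie in A_n (or both lie in B_n). Then u ≠ v if and only if Φ(u) ∩ Φ(v) = ∅. -/
import Mathlib


/-- The two-letter alphabet. -/
inductive Letter : Type
  | a : Letter
  | b : Letter
deriving DecidableEq

/-- A word is a finite sequence of letters. -/
abbrev Word := List Letter

/-- Concatenation set `UV = {uv : u ∈ U, v ∈ V}`. -/
def concatSet (U V : Set Word) : Set Word := {w | ∃ u ∈ U, ∃ v ∈ V, w = u ++ v}

mutual
  /-- The sets `A_n` of inflated words (indexed so that `Aset 1 = {a}`). -/
  def Aset : ℕ → Set Word
    | 0 => ∅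
    | 1 => {[Letter.a]}
    | n + 2 => concatSet (Bset (n + 1)) (concatSet (Aset (n + 1)) (Aset (n + 1)))
  /-- The sets `B_n` of inflated words (indexed so that `Bset 1 = {b}`). -/
  def Bset : ℕ → Set Word
    | 0 => ∅
    | 1 => {[Letter.b]}
    | n + 2 => concatSet (Aset (n + 1)) (Bset (n + 1)) ∪ concatSet (Bset (n + 1)) (Aset (n + 1))
end

/-- The sub-word `w[a,b] = w_a w_{a+1} … w_b` (1-indexed). -/
def wordSlice (w : Word) (i j : ℕ) : Word := (w.drop (i - 1)).take (j - i + 1)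

/-- `W[a,b] = {w[a,b] : w ∈ W}`. -/
def setSlice (W : Set Word) (i j : ℕ) : Set Word := {x | ∃ w ∈ W, x = wordSlice w i j}

/-- `x` is a sub-word (contiguous factor) of `w`. -/
def IsFactor (x w : Word) : Prop := ∃ u v : Word, w = u ++ x ++ v

/-- `F(S, m)`: the set of all sub-words of length `m` of words in `S`. -/
def FactorSet (S : Set Word) (m : ℕ) : Set Word :=
  {x | x.length = m ∧ ∃ w ∈ S, IsFactor x w}

/-- `F(A, m) = ⋃_{n ≥ 1} F(A_n, m)`. -/
def FA (m : ℕ) : Set Word := ⋃ n ∈ {n : ℕ | 1 ≤ n}, FactorSet (Aset n) m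

/-- `F(B, m) = ⋃_{n ≥ 1} F(B_n, m)`. -/
def FB (m : ℕ) : Set Word := ⋃ n ∈ {n : ℕ | 1 ≤ n}, FactorSet (Bset n) m

/-- The golden mean `τ = (1 + √5)/2`. -/
noncomputable def tau : ℝ := (1 + Real.sqrt 5) / 2

/-- `Phi w`: all words obtainable from `w` by replacing each `a` by `baa` and each
`b` independently by either `ab` or `ba`. -/
def Phi : Word → Set Word
  | [] => {[]}
  | Letter.a :: w => {x | ∃ y ∈ Phi w, x = Letter.b :: Letter.a :: Letter.a :: y}
  | Letter.b :: w => {x | ∃ y ∈ Phi w,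
      x = Letter.a :: Letter.b :: y ∨ x = Letter.b :: Letter.a :: y}


lemma phi_nonempty : ∀ w : Word, (Phi w).Nonempty := by
  intro w
  induction w with
  | nil => exact ⟨[], rfl⟩
  | cons c w ih =>
    obtain ⟨x, hx⟩ := ih
    cases c with
    | a => exact ⟨Letter.b :: Letter.a :: Letter.a :: x, ⟨x, hx, rfl⟩⟩
    | b => exact ⟨Letter.a :: Letter.b :: x, ⟨x, hx, Or.inl rfl⟩⟩

lemma phi_noA (n : ℕ) : ∀ p s t : Word, p.length = n → p ∈ Phi s →
    (Letter.a :: p) ∈ Phi t → False := by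
  induction n using Nat.strong_induction_on with
  | _ n ih =>
    intro p s t hlen hp hap
    cases t with
    | nil => simp [Phi] at hap
    | cons d t' =>
      cases d with
      | a =>
        obtain ⟨y, hy, hx⟩ := hap
        simp at hx
      | b =>
        obtain ⟨y, hy, hx⟩ := hap
        rcases hx with hx | hx
        · -- a::p = a::b::y, so p = b::y
          have hp' : p = Letter.b :: y := by injection hx
          subst hp'
          cases s with
          | nil => simp [Phi] at hp
          | cons c s' =>
            cases c with
            | a =>
              obtain ⟨q, hq, hxq⟩ := hp
              have hy' : y = Letter.a :: Letter.a :: q := by injection hxq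
              subst hy'
              cases t' with
              | nil => simp [Phi] at hy
              | cons e t'' =>
                cases e with
                | a =>
                  obtain ⟨z, hz, hxz⟩ := hy
                  simp at hxz
                | b =>
                  obtain ⟨z, hz, hxz⟩ := hy
                  rcases hxz with hxz | hxz <;> simp at hxz
            | b =>
              obtain ⟨q, hq, hxq⟩ := hp
              rcases hxq with hxq | hxq
              · simp at hxq
              · have hy' : y = Letter.a :: q := by injection hxq
                subst hy'
                exact ih q.length (by simp at hlen; omega) q s' t' rfl hq hy
        · simp at hx

lemma phi_inj : ∀ u v x : Word, x ∈ Phi u → x ∈ Phi v → u = v := by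
  intro u
  induction u with
  | nil =>
    intro v x hu hv
    have hx : x = [] := by simpa [Phi] using hu
    subst hx
    cases v with
    | nil => rfl
    | cons d v' =>
      cases d with
      | a => obtain ⟨y, hy, hxy⟩ := hv; simp at hxy
      | b => obtain ⟨y, hy, hxy⟩ := hv; rcases hxy with h | h <;> simp at h
  | cons c u' ih =>
    intro v x hu hv
    cases v with
    | nil =>
      have hx : x = [] := by simpa [Phi] using hv
      subst hx
      cases c with
      | a => obtain ⟨y, hy, hxy⟩ := hu; simp at hxy
      | b => obtain ⟨y, hy, hxy⟩ := hu; rcases hxy with h | h <;> simp at h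
    | cons d v' =>
      cases c with
      | a =>
        obtain ⟨y, hy, hxy⟩ := hu
        subst hxy
        cases d with
        | a =>
          obtain ⟨z, hz, hxz⟩ := hv
          have : y = z := by simpa using hxz
          rw [ih v' y hy (this ▸ hz)]
        | b =>
          obtain ⟨z, hz, hxz⟩ := hv
          rcases hxz with hxz | hxz
          · simp at hxz
          · have hz' : z = Letter.a :: y := by simpa using hxz.symm
            exact absurd (hz' ▸ hz) (fun h => phi_noA y.length y u' v' rfl hy h)
      | b =>
        obtain ⟨y, hy, hxy⟩ := hu
        cases d with
        | a =>
          obtain ⟨z, hz, hxz⟩ := hv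
          subst hxz
          rcases hxy with hxy | hxy
          · simp at hxy
          · have hy' : y = Letter.a :: z := by simpa using hxy.symm
            exact absurd (hy' ▸ hy) (fun h => phi_noA z.length z v' u' rfl hz h)
        | b =>
          obtain ⟨z, hz, hxz⟩ := hv
          rcases hxy with hxy | hxy <;> rcases hxz with hxz | hxz <;> subst hxy
          · have : y = z := by simpa using hxz
            rw [ih v' y hy (this ▸ hz)]
          · simp at hxz
          · simp at hxz
          · have : y = z := by simpa using hxz
            rw [ih v' y hy (this ▸ hz)]

theorem phi_injective (n : ℕ) (hn : 1 ≤ n) (u v : Word)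
    (h : (u ∈ Aset n ∧ v ∈ Aset n) ∨ (u ∈ Bset n ∧ v ∈ Bset n)) :
    u ≠ v ↔ Phi u ∩ Phi v = ∅ := by
  constructor
  · intro hne
    rw [Set.eq_empty_iff_forall_notMem]
    rintro x ⟨h1, h2⟩
    exact hne (phi_inj u v x h1 h2)
  · intro hemp heq
    subst heq
    obtain ⟨x, hx⟩ := phi_nonempty u
    exact (Set.eq_empty_iff_forall_notMem.mp hemp x) ⟨hx, hx⟩
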